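/- Let G be a k-regular finite simple connected super-λ'' graph with girth exactly 3. If k ≥ 6, then G is super-λ' and ρ'(G) ≥ k − 3; if k = 5, then G is super-λ' and ρ'(G) = 2. -/

import Mathlib

open SimpleGraph

variable {V : Type*}

/-- The degree of a vertex, as the cardinality of its neighbor set. -/
noncomputable def degN (G : SimpleGraph V) (v : V) : ℕ := (G.neighborSet v).ncard

/-- The minimum degree `δ(G)`. -/
noncomputable def minDeg (G : SimpleGraph V) : ℕ := sInf {k | ∃ v, degN G v = k}

/-- `d_G(X)`: the number of edges of `G` with exactly one endpoint in `X`. -/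
noncomputable def dOut (G : SimpleGraph V) (X : Set V) : ℕ :=
  {e ∈ G.edgeSet | ∃ x ∈ X, ∃ y ∈ Xᶜ, e = s(x, y)}.ncard

/-- `F` is an `h`-extra edge-cut of `G`: a set of edges of `G` whose removal disconnects `G`
and such that every connected component of `G - F` has more than `h` vertices. -/
def IsExtraEdgeCut (G : SimpleGraph V) (h : ℕ) (F : Set (Sym2 V)) : Prop :=
  F ⊆ G.edgeSet ∧ ¬(G.deleteEdges F).Connected ∧
    ∀ c : (G.deleteEdges F).ConnectedComponent, h < c.supp.ncard

/-- `G` is `λ^(h)`-connected: an `h`-extra edge-cut exists. -/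
def LambdaConn (G : SimpleGraph V) (h : ℕ) : Prop := ∃ F, IsExtraEdgeCut G h F

/-- The `h`-extra edge-connectivity `λ^(h)(G)`: the minimum cardinality of an
`h`-extra edge-cut. -/
noncomputable def lambdaH (G : SimpleGraph V) (h : ℕ) : ℕ :=
  sInf {k | ∃ F, IsExtraEdgeCut G h F ∧ F.ncard = k}

/-- `ξ_h(G)`: the minimum of `d_G(X)` over vertex sets `X` of size `h + 1` inducing a
connected subgraph. -/
noncomputable def xiH (G : SimpleGraph V) (h : ℕ) : ℕ :=
  sInf {k | ∃ X : Set V, X.ncard = h + 1 ∧ (G.induce X).Connected ∧ dOut G X = k}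

/-- `G` is super-`λ^(h)`: it is connected, `λ^(h)`-connected, `λ^(h)`-optimal
(`λ^(h)(G) = ξ_h(G)`), and every minimum `h`-extra edge-cut leaves a component with
exactly `h + 1` vertices. -/
def SuperLambda (G : SimpleGraph V) (h : ℕ) : Prop :=
  G.Connected ∧ LambdaConn G h ∧ lambdaH G h = xiH G h ∧
    ∀ F : Set (Sym2 V), IsExtraEdgeCut G h F → F.ncard = lambdaH G h →
      ∃ c : (G.deleteEdges F).ConnectedComponent, c.supp.ncard = h + 1

/-- The persistence `ρ^(h)(G)`: the largest `m` such that `G - F` is super-`λ^(h)` for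
every set `F` of at most `m` edges of `G`. -/
noncomputable def rhoH (G : SimpleGraph V) (h : ℕ) : ℕ :=
  sSup {m : ℕ | ∀ F : Set (Sym2 V), F ⊆ G.edgeSet → F.ncard ≤ m →
    SuperLambda (G.deleteEdges F) h}

/-- `ξ(G)`: the minimum edge-degree `deg x + deg y - 2` over the edges `xy` of `G`. -/
noncomputable def xiEdge (G : SimpleGraph V) : ℕ :=
  sInf {k | ∃ x y, G.Adj x y ∧ degN G x + degN G y - 2 = k}

/-- `η(G)`: the number of edges of `G` whose edge-degree equals `ξ(G)`. -/
noncomputable def eta (G : SimpleGraph V) : ℕ :=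
  {e ∈ G.edgeSet | ∃ x y, e = s(x, y) ∧ degN G x + degN G y - 2 = xiEdge G}.ncard

/-!
Deleting a set `F` of at most `k - 3` edges leaves minimum degree at least `3`, so the boundary
of every edge of `G - F` is a `1`-extra cut and `λ'(G - F) ≤ ξ(G - F)`. Since `G` is
super-`λ''` and `k`-regular, every `2`-extra cut of `G` has at least `3k - 6` edges. If a
minimum `1`-extra cut `C` of `G - F` left no component with two vertices, `F ∪ C` would be a
`2`-extra cut of `G`, so `|C| ≥ 2k - 3`. This already contradicts `|C| ≤ ξ(G) ≤ 2k - 2` when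
`F = ∅`; otherwise `|C| ≤ ξ(G - F) ≤ 2k - 3`, so `F ∪ C` is a minimum `2`-extra cut and
isolates a triangle of `G - F`. Each of its three edges has a boundary of at least `|C|`
edges while the triangle has at most `|C|`, and counting degrees gives `3|C| ≤ 2|C| + 6`,
contradicting `|C| ≥ 7`. Hence `G - F` is super-`λ'` and `ρ'(G) ≥ k - 3`.

For `k = 5`, take a triangle `T` and delete one edge from each vertex of `T` to three distinct
vertices outside `T`. The resulting graph has minimum degree `4`, so `ξ ≥ 6`, while the six
remaining edges of `∂T` form a `1`-extra cut whose components all have at least three vertices.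
Were the graph super-`λ'`, this cut would be minimum and isolate an edge; so `ρ'(G) ≤ 2`.
-/

namespace SimpleGraph

variable {G : SimpleGraph V} {X : Set V} {x y : V}

def edgeBoundary (G : SimpleGraph V) (X : Set V) : Set (Sym2 V) :=
  {e ∈ G.edgeSet | ∃ x ∈ X, ∃ y ∈ Xᶜ, e = s(x, y)}

lemma dOut_eq_ncard_edgeBoundary : dOut G X = (edgeBoundary G X).ncard := rfl

lemma edgeBoundary_subset_edgeSet : edgeBoundary G X ⊆ G.edgeSet := fun _ he ↦ he.1

lemma mk_mem_edgeBoundary_iff :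
    s(x, y) ∈ edgeBoundary G X ↔ G.Adj x y ∧ (x ∈ X ↔ y ∉ X) := by
  refine ⟨?_, fun ⟨hxy, hX⟩ ↦ ?_⟩
  · rintro ⟨hxy, u, hu, w, hw, he⟩
    refine ⟨hxy, ?_⟩
    rcases Sym2.eq_iff.mp he with ⟨rfl, rfl⟩ | ⟨rfl, rfl⟩ <;> simp_all
  · by_cases hx : x ∈ X
    · exact ⟨hxy, x, hx, y, hX.mp hx, rfl⟩
    · exact ⟨hxy, y, not_not.mp (hX.not.mp hx), x, hx, Sym2.eq_swap⟩

lemma edgeBoundary_deleteEdges (F : Set (Sym2 V)) :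
    edgeBoundary (G.deleteEdges F) X = edgeBoundary G X \ F := by
  ext e
  simp only [edgeBoundary, edgeSet_deleteEdges, Set.mem_ofPred_eq, Set.mem_sdiff]
  tauto

lemma edgeBoundary_eq_biUnion :
    edgeBoundary G X = ⋃ x ∈ X, (s(x, ·)) '' (G.neighborSet x \ X) := by
  ext e
  induction e using Sym2.ind with
  | _ u w =>
  simp only [Set.mem_iUnion, Set.mem_image, Set.mem_sdiff, mem_neighborSet, exists_prop,
    mk_mem_edgeBoundary_iff, Sym2.eq_iff]
  constructor
  · rintro ⟨huw, hX⟩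
    by_cases hu : u ∈ X
    · exact ⟨u, hu, w, ⟨huw, hX.mp hu⟩, Or.inl ⟨rfl, rfl⟩⟩
    · exact ⟨w, not_not.mp (hX.not.mp hu), u, ⟨huw.symm, hu⟩, Or.inr ⟨rfl, rfl⟩⟩
  · rintro ⟨x, hx, z, ⟨hxz, hz⟩, ⟨rfl, rfl⟩ | ⟨rfl, rfl⟩⟩
    · exact ⟨hxz, by tauto⟩
    · exact ⟨hxz.symm, by tauto⟩

lemma dOut_eq_sum [Finite V] (s : Finset V) :
    dOut G s = ∑ x ∈ s, (G.neighborSet x \ s).ncard := by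
  rw [dOut_eq_ncard_edgeBoundary, edgeBoundary_eq_biUnion,
    Set.Finite.ncard_biUnion s.finite_toSet (fun _ _ ↦ Set.toFinite _), finsum_mem_coe_finset]
  · refine Finset.sum_congr rfl fun x _ ↦ Set.ncard_image_of_injective _ fun _ _ ↦ ?_
    exact Sym2.congr_right.mp
  · intro x hx x' hx' hne
    refine Set.disjoint_left.mpr ?_
    rintro _ ⟨z, ⟨-, hz⟩, rfl⟩ ⟨z', -, he⟩
    rcases Sym2.eq_iff.mp he with ⟨h, -⟩ | ⟨rfl, rfl⟩
    · exact hne h.symm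
    · simp_all

lemma neighborSet_inter_subset_sdiff_singleton : G.neighborSet x ∩ X ⊆ X \ {x} := by
  rintro z ⟨hz, hzX⟩
  exact ⟨hzX, by rintro rfl; exact G.irrefl hz⟩

lemma ncard_neighborSet_inter_le [Finite V] (hx : x ∈ X) :
    (G.neighborSet x ∩ X).ncard ≤ X.ncard - 1 := by
  rw [← Set.ncard_sdiff_singleton_of_mem hx]
  exact Set.ncard_le_ncard neighborSet_inter_subset_sdiff_singleton

lemma sum_degN_eq [Finite V] (s : Finset V) :
    ∑ x ∈ s, degN G x = dOut G s + ∑ x ∈ s, (G.neighborSet x ∩ s).ncard := by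
  rw [dOut_eq_sum, ← Finset.sum_add_distrib]
  exact Finset.sum_congr rfl fun x _ ↦ by
    rw [degN, add_comm, Set.ncard_inter_add_ncard_sdiff_eq_ncard]

lemma sum_degN_le [Finite V] (s : Finset V) :
    ∑ x ∈ s, degN G x ≤ dOut G s + s.card * (s.card - 1) := by
  rw [sum_degN_eq, ← smul_eq_mul, ← Finset.sum_const]
  gcongr with x hx
  simpa using ncard_neighborSet_inter_le (G := G) (Finset.mem_coe.mpr hx)

lemma neighborSet_inter_eq_of_isClique (hX : G.IsClique X) (hx : x ∈ X) :
    G.neighborSet x ∩ X = X \ {x} := by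
  ext z
  simp only [Set.mem_inter_iff, mem_neighborSet, Set.mem_sdiff, Set.mem_singleton_iff]
  exact ⟨fun ⟨hxz, hz⟩ ↦ ⟨hz, hxz.ne'⟩,
    fun ⟨hz, hzx⟩ ↦ ⟨hX hx hz (Ne.symm hzx), hz⟩⟩

lemma IsNClique.sum_degN_eq [Finite V] {n : ℕ} {s : Finset V} (hs : G.IsNClique n s) :
    ∑ x ∈ s, degN G x = dOut G s + n * (n - 1) := by
  have hterm : ∀ x ∈ s, (G.neighborSet x ∩ s).ncard = n - 1 := fun x hx ↦ by
    rw [neighborSet_inter_eq_of_isClique hs.isClique hx, Set.ncard_sdiff_singleton_of_mem hx,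
      Set.ncard_coe_finset, hs.card_eq]
  rw [SimpleGraph.sum_degN_eq, Finset.sum_congr rfl hterm, Finset.sum_const, hs.card_eq,
    smul_eq_mul]

lemma isClique_of_le_sum_degN [Finite V] {s : Finset V}
    (h : dOut G s + s.card * (s.card - 1) ≤ ∑ x ∈ s, degN G x) : G.IsClique (s : Set V) := by
  rw [sum_degN_eq, add_le_add_iff_left, ← smul_eq_mul, ← Finset.sum_const] at h
  have hle : ∀ x ∈ s, (G.neighborSet x ∩ s).ncard ≤ s.card - 1 := fun x hx ↦ by
    simpa using ncard_neighborSet_inter_le (G := G) (Finset.mem_coe.mpr hx)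
  have heq := (Finset.sum_eq_sum_iff_of_le hle).mp (le_antisymm (Finset.sum_le_sum hle) h)
  intro x hx y hy hxy
  have hcard : ((s : Set V) \ {x}).ncard ≤ (G.neighborSet x ∩ s).ncard := by
    rw [Set.ncard_sdiff_singleton_of_mem hx, Set.ncard_coe_finset, heq x hx]
  have hy' : y ∈ G.neighborSet x ∩ s := by
    rw [Set.eq_of_subset_of_ncard_le neighborSet_inter_subset_sdiff_singleton hcard]
    exact ⟨hy, Ne.symm hxy⟩
  exact hy'.1

lemma dOut_pair_add_two [Finite V] (h : G.Adj x y) :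
    dOut G {x, y} + 2 = degN G x + degN G y := by
  classical
  have hs : G.IsNClique 2 {x, y} := ⟨by simpa [isClique_pair] using fun _ ↦ h, by simp [h.ne]⟩
  simpa [Finset.sum_pair h.ne, eq_comm] using hs.sum_degN_eq

lemma dOut_triangle_add_six [Finite V] {a b c : V} (hab : G.Adj a b) (hac : G.Adj a c)
    (hbc : G.Adj b c) : dOut G {a, b, c} + 6 = degN G a + degN G b + degN G c := by
  classical
  have hs := (is3Clique_triple_iff (G := G)).mpr ⟨hab, hac, hbc⟩
  simpa [Finset.sum_insert, hab.ne, hac.ne, hbc.ne, add_assoc, eq_comm] using hs.sum_degN_eq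

lemma ConnectedComponent.edgeBoundary_supp_subset {F : Set (Sym2 V)}
    (c : (G.deleteEdges F).ConnectedComponent) : edgeBoundary G c.supp ⊆ F := by
  intro e he
  induction e using Sym2.ind with
  | _ u w =>
  rw [mk_mem_edgeBoundary_iff] at he
  by_contra hF
  have := c.mem_supp_congr_adj (deleteEdges_adj.mpr ⟨he.1, hF⟩)
  tauto

lemma ConnectedComponent.degN_add_one_le_ncard_supp [Finite V] (c : G.ConnectedComponent)
    {v : V} (hv : v ∈ c.supp) : degN G v + 1 ≤ c.supp.ncard := by
  have hsub : insert v (G.neighborSet v) ⊆ c.supp := by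
    rintro w (rfl | hw)
    exacts [hv, c.mem_supp_of_adj_mem_supp hv hw]
  calc degN G v + 1 = (insert v (G.neighborSet v)).ncard :=
        (Set.ncard_insert_of_notMem (G.notMem_neighborSet_self) (Set.toFinite _)).symm
    _ ≤ c.supp.ncard := Set.ncard_le_ncard hsub

lemma Reachable.mem_iff_of_deleteEdges_edgeBoundary {u w : V}
    (huw : (G.deleteEdges (edgeBoundary G X)).Reachable u w) : u ∈ X ↔ w ∈ X := by
  obtain ⟨p⟩ := huw
  induction p with
  | nil => rfl
  | cons ha _ ih =>
    rw [deleteEdges_adj, mk_mem_edgeBoundary_iff] at ha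
    exact (by tauto : _ ↔ _).trans ih

lemma reachable_deleteEdges_edgeBoundary_of_connected (hXc : (G.induce X).Connected) {u w : V}
    (hu : u ∈ X) (hw : w ∈ X) : (G.deleteEdges (edgeBoundary G X)).Reachable u w := by
  let f : G.induce X →g G.deleteEdges (edgeBoundary G X) :=
    ⟨Subtype.val, fun {a b} hab ↦ deleteEdges_adj.mpr
      ⟨hab, fun hmem ↦ (mk_mem_edgeBoundary_iff.mp hmem).2.mp a.2 b.2⟩⟩
  exact (hXc.preconnected ⟨u, hu⟩ ⟨w, hw⟩).map f

lemma isExtraEdgeCut_edgeBoundary [Finite V] {h : ℕ} (hX : X.ncard = h + 1)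
    (hXc : (G.induce X).Connected) (hδ : ∀ v, 2 * h + 1 ≤ degN G v) :
    IsExtraEdgeCut G h (edgeBoundary G X) := by
  have hsplit : ∀ v, degN G v = (G.neighborSet v ∩ X).ncard + (G.neighborSet v \ X).ncard :=
    fun v ↦ (Set.ncard_inter_add_ncard_sdiff_eq_ncard _ _).symm
  refine ⟨edgeBoundary_subset_edgeSet, fun hH ↦ ?_, fun c ↦ ?_⟩
  · obtain ⟨x, hx⟩ := Set.nonempty_of_ncard_ne_zero (s := X) (by omega)
    have hin := ncard_neighborSet_inter_le (G := G) hx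
    obtain ⟨w, hwN, hwX⟩ := Set.nonempty_of_ncard_ne_zero (s := G.neighborSet x \ X)
      (by have := hsplit x; have := hδ x; omega)
    exact hwX ((hH.preconnected x w).mem_iff_of_deleteEdges_edgeBoundary.mp hx)
  · induction c using ConnectedComponent.ind with
    | _ v =>
    by_cases hv : v ∈ X
    · have hsub : X ⊆ ((G.deleteEdges (edgeBoundary G X)).connectedComponentMk v).supp :=
        fun w hw ↦
          ConnectedComponent.sound (reachable_deleteEdges_edgeBoundary_of_connected hXc hw hv)
      have := Set.ncard_le_ncard hsub
      omega
    · have hout : G.neighborSet v \ X ⊆ (G.deleteEdges (edgeBoundary G X)).neighborSet v :=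
        fun w ⟨hw, hwX⟩ ↦ deleteEdges_adj.mpr
          ⟨hw, fun hmem ↦ hv ((mk_mem_edgeBoundary_iff.mp hmem).2.mpr hwX)⟩
      have h1 := Set.ncard_le_ncard hout
      have h2 := ConnectedComponent.degN_add_one_le_ncard_supp
        ((G.deleteEdges (edgeBoundary G X)).connectedComponentMk v) rfl
      have h3 := Set.ncard_le_ncard (Set.inter_subset_right (s := G.neighborSet v) (t := X))
      have := hsplit v
      have := hδ v
      unfold degN at h2
      omega

lemma mul_le_dOut_add [Finite V] {n δ : ℕ} (hX : X.ncard = n) (hδ : ∀ v, δ ≤ degN G v) :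
    n * δ ≤ dOut G X + n * (n - 1) := by
  lift X to Finset V using X.toFinite
  rw [Set.ncard_coe_finset] at hX
  subst hX
  calc X.card * δ ≤ ∑ x ∈ X, degN G x := by
        simpa using Finset.card_nsmul_le_sum X (degN G) δ fun x _ ↦ hδ x
    _ ≤ _ := sum_degN_le X

lemma isClique_and_edgeBoundary_eq [Finite V] {n δ : ℕ} {C : Set (Sym2 V)} (hX : X.ncard = n)
    (hδ : ∀ v, δ ≤ degN G v) (hsub : edgeBoundary G X ⊆ C)
    (hC : C.ncard + n * (n - 1) ≤ n * δ) :
    G.IsClique X ∧ edgeBoundary G X = C := by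
  have hd : dOut G X ≤ C.ncard := Set.ncard_le_ncard hsub
  have hlow := mul_le_dOut_add hX hδ
  refine ⟨?_, Set.eq_of_subset_of_ncard_le hsub (by rw [← dOut_eq_ncard_edgeBoundary]; omega)⟩
  lift X to Finset V using X.toFinite
  rw [Set.ncard_coe_finset] at hX
  subst hX
  have hsum : X.card * δ ≤ ∑ x ∈ X, degN G x := by
    simpa using Finset.card_nsmul_le_sum X (degN G) δ fun x _ ↦ hδ x
  exact isClique_of_le_sum_degN (by omega)

namespace IsExtraEdgeCut

variable {h : ℕ} {C F : Set (Sym2 V)}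

lemma deleteEdges_sdiff (hC : IsExtraEdgeCut G h C) (hFC : F ⊆ C) :
    IsExtraEdgeCut (G.deleteEdges F) h (C \ F) := by
  have heq : (G.deleteEdges F).deleteEdges (C \ F) = G.deleteEdges C := by
    rw [deleteEdges_deleteEdges, Set.union_sdiff_cancel hFC]
  refine ⟨?_, heq ▸ hC.2.1, heq ▸ hC.2.2⟩
  rw [edgeSet_deleteEdges]
  exact Set.sdiff_subset_sdiff_left hC.1

lemma union {h' : ℕ} (hC : IsExtraEdgeCut (G.deleteEdges F) h C) (hF : F ⊆ G.edgeSet)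
    (hlarge : ∀ c : ((G.deleteEdges F).deleteEdges C).ConnectedComponent, h' < c.supp.ncard) :
    IsExtraEdgeCut G h' (F ∪ C) := by
  have heq : (G.deleteEdges F).deleteEdges C = G.deleteEdges (F ∪ C) :=
    deleteEdges_deleteEdges _ _
  refine ⟨Set.union_subset hF fun e he ↦ ?_, heq ▸ hC.2.1, heq ▸ hlarge⟩
  have := hC.1 he
  rw [edgeSet_deleteEdges] at this
  exact this.1

end IsExtraEdgeCut

lemma lambdaH_le {h : ℕ} {C : Set (Sym2 V)} (hC : IsExtraEdgeCut G h C) :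
    lambdaH G h ≤ C.ncard :=
  Nat.sInf_le ⟨C, hC, rfl⟩

lemma LambdaConn.exists_ncard_eq_lambdaH {h : ℕ} (hG : LambdaConn G h) :
    ∃ C, IsExtraEdgeCut G h C ∧ C.ncard = lambdaH G h := by
  obtain ⟨C, hC⟩ := hG
  exact Nat.sInf_mem (s := {k | ∃ F, IsExtraEdgeCut G h F ∧ F.ncard = k}) ⟨_, C, hC, rfl⟩

lemma xiH_le_dOut {h : ℕ} (hX : X.ncard = h + 1) (hXc : (G.induce X).Connected) :
    xiH G h ≤ dOut G X :=
  Nat.sInf_le ⟨X, hX, hXc, rfl⟩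

lemma xiH_one_add_two_le [Finite V] (hxy : G.Adj x y) : xiH G 1 + 2 ≤ degN G x + degN G y := by
  have := xiH_le_dOut (Set.ncard_pair hxy.ne) (induce_pair_connected_of_adj hxy)
  have := dOut_pair_add_two hxy
  omega

lemma le_xiH [Finite V] {h δ : ℕ} (hX : X.ncard = h + 1) (hXc : (G.induce X).Connected)
    (hδ : ∀ v, δ ≤ degN G v) : (h + 1) * δ ≤ xiH G h + (h + 1) * h := by
  rw [← tsub_le_iff_right]
  refine le_csInf ⟨_, X, hX, hXc, rfl⟩ ?_
  rintro _ ⟨Y, hY, -, rfl⟩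
  have := mul_le_dOut_add hY hδ
  simp only [add_tsub_cancel_right] at this
  omega

lemma lambdaH_le_xiH [Finite V] {h : ℕ} (hX : X.ncard = h + 1) (hXc : (G.induce X).Connected)
    (hδ : ∀ v, 2 * h + 1 ≤ degN G v) : lambdaH G h ≤ xiH G h := by
  have hmem : xiH G h ∈ {k | ∃ Y : Set V, Y.ncard = h + 1 ∧ (G.induce Y).Connected ∧
      dOut G Y = k} := Nat.sInf_mem ⟨_, X, hX, hXc, rfl⟩
  obtain ⟨Y, hY, hYc, hYd⟩ := hmem
  exact hYd ▸ lambdaH_le (isExtraEdgeCut_edgeBoundary hY hYc hδ)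

lemma ConnectedComponent.induce_supp_connected_of_deleteEdges {F : Set (Sym2 V)}
    (c : (G.deleteEdges F).ConnectedComponent) : (G.induce c.supp).Connected :=
  Connected.mono (G := (G.deleteEdges F).induce c.supp) (fun _ _ hab ↦ (deleteEdges_adj.mp hab).1)
    c.connected_toSimpleGraph

lemma xiH_le_lambdaH [Finite V] {h : ℕ} (hG : LambdaConn G h)
    (hmin : ∀ C, IsExtraEdgeCut G h C → C.ncard = lambdaH G h →
      ∃ c : (G.deleteEdges C).ConnectedComponent, c.supp.ncard = h + 1) :
    xiH G h ≤ lambdaH G h := by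
  obtain ⟨C, hC, hCcard⟩ := hG.exists_ncard_eq_lambdaH
  obtain ⟨c, hc⟩ := hmin C hC hCcard
  calc xiH G h ≤ dOut G c.supp := xiH_le_dOut hc c.induce_supp_connected_of_deleteEdges
    _ ≤ C.ncard := Set.ncard_le_ncard c.edgeBoundary_supp_subset
    _ = lambdaH G h := hCcard

lemma SuperLambda.mul_le_ncard_add [Finite V] {h δ : ℕ} {C : Set (Sym2 V)}
    (hs : SuperLambda G h) (hδ : ∀ v, δ ≤ degN G v) (hC : IsExtraEdgeCut G h C) :
    (h + 1) * δ ≤ C.ncard + (h + 1) * h := by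
  obtain ⟨C₀, hC₀, hC₀card⟩ := hs.2.1.exists_ncard_eq_lambdaH
  obtain ⟨c, hc⟩ := hs.2.2.2 C₀ hC₀ hC₀card
  have h1 := mul_le_dOut_add hc hδ
  have h2 : dOut G c.supp ≤ C₀.ncard := Set.ncard_le_ncard c.edgeBoundary_supp_subset
  have h3 := lambdaH_le hC
  simp only [add_tsub_cancel_right] at h1
  omega

lemma superLambda_of_minimum_cuts [Finite V] {h : ℕ} (hconn : G.Connected)
    (hX : X.ncard = h + 1) (hXc : (G.induce X).Connected) (hδ : ∀ v, 2 * h + 1 ≤ degN G v)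
    (hmin : ∀ C, IsExtraEdgeCut G h C → C.ncard = lambdaH G h →
      ∃ c : (G.deleteEdges C).ConnectedComponent, c.supp.ncard = h + 1) :
    SuperLambda G h :=
  have hG : LambdaConn G h := ⟨_, isExtraEdgeCut_edgeBoundary hX hXc hδ⟩
  ⟨hconn, hG, (lambdaH_le_xiH hX hXc hδ).antisymm (xiH_le_lambdaH hG hmin), hmin⟩

lemma not_superLambda_of_isExtraEdgeCut_succ [Finite V] {h δ : ℕ} {C : Set (Sym2 V)}
    (hX : X.ncard = h + 1) (hXc : (G.induce X).Connected) (hδ : ∀ v, δ ≤ degN G v)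
    (hC : IsExtraEdgeCut G (h + 1) C) (hCcard : C.ncard + (h + 1) * h ≤ (h + 1) * δ) :
    ¬ SuperLambda G h := by
  intro hs
  have hCh : IsExtraEdgeCut G h C := ⟨hC.1, hC.2.1, fun c ↦ (hC.2.2 c).trans' (by omega)⟩
  have := le_xiH hX hXc hδ
  have := lambdaH_le hCh
  have := hs.2.2.1
  obtain ⟨c, hc⟩ := hs.2.2.2 C hCh (by omega)
  have := hC.2.2 c
  omega

lemma exists_adj_of_degN_pos {v : V} (hv : 0 < degN G v) : ∃ w, G.Adj v w :=
  Set.nonempty_of_ncard_ne_zero hv.ne'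

lemma degN_eq_degN_deleteEdges_add [Finite V] (F : Set (Sym2 V)) (v : V) :
    degN G v = degN (G.deleteEdges F) v + (G.neighborSet v ∩ {w | s(v, w) ∈ F}).ncard := by
  have hH : (G.deleteEdges F).neighborSet v = G.neighborSet v \ {w | s(v, w) ∈ F} := by
    ext w
    simp
  rw [degN, degN, hH, add_comm, Set.ncard_inter_add_ncard_sdiff_eq_ncard]

lemma degN_le_degN_deleteEdges_add [Finite V] (F : Set (Sym2 V)) (v : V) :
    degN G v ≤ degN (G.deleteEdges F) v + F.ncard := by
  rw [degN_eq_degN_deleteEdges_add F v, add_le_add_iff_left]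
  exact Set.ncard_le_ncard_of_injOn (s(v, ·)) (fun w hw ↦ hw.2)
    (fun _ _ _ _ h ↦ Sym2.congr_right.mp h)

lemma degN_deleteEdges_lt [Finite V] {F : Set (Sym2 V)} (hxy : G.Adj x y) (hF : s(x, y) ∈ F) :
    degN (G.deleteEdges F) x < degN G x := by
  have hpos : 0 < (G.neighborSet x ∩ {w | s(x, w) ∈ F}).ncard :=
    (Set.ncard_pos).mpr ⟨y, hxy, hF⟩
  have := degN_eq_degN_deleteEdges_add (G := G) F x
  omega

lemma degN_le_degN_deleteEdges_add_one [Finite V] {F : Set (Sym2 V)}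
    (hF : F.Pairwise fun e e' ↦ ∀ v ∈ e, v ∉ e') (v : V) :
    degN G v ≤ degN (G.deleteEdges F) v + 1 := by
  rw [degN_eq_degN_deleteEdges_add F v, add_le_add_iff_left]
  refine (Set.ncard_le_one).mpr fun w₁ h₁ w₂ h₂ ↦ by_contra fun hne ↦ ?_
  exact hF h₁.2 h₂.2 (fun h ↦ hne (Sym2.congr_right.mp h)) v (Sym2.mem_mk_left v w₁)
    (Sym2.mem_mk_left v w₂)

lemma connected_deleteEdges [Finite V] {h : ℕ} {F : Set (Sym2 V)} (hF : F ⊆ G.edgeSet)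
    (hδ : ∀ v, h ≤ degN (G.deleteEdges F) v) (hcut : ¬ IsExtraEdgeCut G h F) :
    (G.deleteEdges F).Connected := by
  by_contra hdisc
  refine hcut ⟨hF, hdisc, fun c ↦ ?_⟩
  induction c using ConnectedComponent.ind with
  | _ v =>
  have := ((G.deleteEdges F).connectedComponentMk v).degN_add_one_le_ncard_supp rfl
  have := hδ v
  omega

lemma three_mul_xiH_one_le [Finite V] {a b c : V} (hab : G.Adj a b) (hac : G.Adj a c)
    (hbc : G.Adj b c) : 3 * xiH G 1 ≤ 2 * dOut G {a, b, c} + 6 := by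
  have := xiH_one_add_two_le hab
  have := xiH_one_add_two_le hac
  have := xiH_one_add_two_le hbc
  have := dOut_triangle_add_six hab hac hbc
  omega

lemma IsClique.deleteEdges_of_subset_edgeBoundary {F : Set (Sym2 V)} (hX : G.IsClique X)
    (hF : F ⊆ edgeBoundary G X) : (G.deleteEdges F).IsClique X :=
  fun _ hu _ hw huw ↦ deleteEdges_adj.mpr
    ⟨hX hu hw huw, fun hmem ↦ (mk_mem_edgeBoundary_iff.mp (hF hmem)).2.mp hu hw⟩

lemma IsClique.induce_connected (hX : G.IsClique X) (hne : X.Nonempty) :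
    (G.induce X).Connected := by
  have := hne.to_subtype
  refine (connected_iff _).mpr ⟨fun u w ↦ ?_, inferInstance⟩
  by_cases huw : u = w
  · exact huw ▸ Reachable.refl u
  · exact Adj.reachable (hX u.2 w.2 (Subtype.coe_ne_coe.mpr huw))

section Regular

variable [Finite V] {k : ℕ} {F : Set (Sym2 V)}

lemma three_le_degN_deleteEdges (hreg : ∀ v, degN G v = k) (hFk : F.ncard + 3 ≤ k) (v : V) :
    3 ≤ degN (G.deleteEdges F) v := by
  have := degN_le_degN_deleteEdges_add (G := G) F v
  have := hreg v
  omega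

lemma ncard_le_six_of_isExtraEdgeCut_union (hreg : ∀ v, degN G v = k) (hs : SuperLambda G 2)
    {C : Set (Sym2 V)} (hcut : IsExtraEdgeCut G 2 (F ∪ C)) (hFC : (F ∪ C).ncard + 6 ≤ 3 * k)
    (hCξ : C.ncard ≤ xiH (G.deleteEdges F) 1) : C.ncard ≤ 6 := by
  obtain ⟨C₀, hC₀, hC₀min⟩ := hs.2.1.exists_ncard_eq_lambdaH
  have := hs.mul_le_ncard_add (fun v ↦ (hreg v).ge) hC₀
  have := lambdaH_le hcut
  obtain ⟨K, hK⟩ := hs.2.2.2 (F ∪ C) hcut (by omega)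
  obtain ⟨hcl, hbdry⟩ := isClique_and_edgeBoundary_eq hK (fun v ↦ (hreg v).ge)
    K.edgeBoundary_supp_subset (by omega)
  have hclF := hcl.deleteEdges_of_subset_edgeBoundary (hbdry ▸ Set.subset_union_left)
  have hdF : dOut (G.deleteEdges F) K.supp ≤ C.ncard := by
    rw [dOut_eq_ncard_edgeBoundary, edgeBoundary_deleteEdges, hbdry, Set.union_sdiff_left]
    exact Set.ncard_le_ncard Set.sdiff_subset
  obtain ⟨a, b, c, hab, hac, hbc, hK⟩ := Set.ncard_eq_three.mp hK
  rw [hK] at hclF hdF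
  have := three_mul_xiH_one_le (hclF (by simp) (by simp) hab) (hclF (by simp) (by simp) hac)
    (hclF (by simp) (by simp) hbc)
  omega

lemma exists_ncard_supp_eq_two_of_minimum_cut (hreg : ∀ v, degN G v = k)
    (hs : SuperLambda G 2) (hk : 5 ≤ k) (hF : F ⊆ G.edgeSet) (hFk : F.ncard + 3 ≤ k)
    {C : Set (Sym2 V)} (hC : IsExtraEdgeCut (G.deleteEdges F) 1 C)
    (hCmin : C.ncard = lambdaH (G.deleteEdges F) 1) :
    ∃ c : ((G.deleteEdges F).deleteEdges C).ConnectedComponent, c.supp.ncard = 2 := by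
  have hδ := three_le_degN_deleteEdges hreg hFk
  have hΔ : ∀ v, degN (G.deleteEdges F) v ≤ k := fun v ↦ by
    have := degN_eq_degN_deleteEdges_add (G := G) F v
    have := hreg v
    omega
  have hnbr : ∀ v, ∃ w, (G.deleteEdges F).Adj v w :=
    fun v ↦ exists_adj_of_degN_pos (by have := hδ v; omega)
  obtain ⟨v⟩ := hs.1.nonempty
  obtain ⟨w, hvw⟩ := hnbr v
  have hCξ : C.ncard ≤ xiH (G.deleteEdges F) 1 :=
    hCmin ▸ lambdaH_le_xiH (Set.ncard_pair hvw.ne) (induce_pair_connected_of_adj hvw) hδ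
  by_contra! hno
  have hcut : IsExtraEdgeCut G 2 (F ∪ C) := hC.union hF fun c ↦ by
    have := hC.2.2 c
    have := hno c
    omega
  have hlow := hs.mul_le_ncard_add (fun v ↦ (hreg v).ge) hcut
  have hunion := Set.ncard_union_le F C
  rcases F.eq_empty_or_nonempty with rfl | ⟨e, he⟩
  · have := xiH_one_add_two_le hvw
    have := hΔ v
    have := hΔ w
    simp only [Set.empty_union] at hlow
    omega
  -- An endpoint `x` of a deleted edge has lower degree, so `|C| ≤ ξ(G - F) ≤ 2k - 3`.
  induction e using Sym2.ind with
  | _ x y =>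
  have := degN_deleteEdges_lt (G.mem_edgeSet.mp (hF he)) he
  obtain ⟨z, hxz⟩ := hnbr x
  have := xiH_one_add_two_le hxz
  have := hΔ z
  have := hreg x
  have := ncard_le_six_of_isExtraEdgeCut_union hreg hs hcut (by omega) hCξ
  omega

lemma superLambda_one_deleteEdges (hreg : ∀ v, degN G v = k) (hs : SuperLambda G 2)
    (hk : 5 ≤ k) (hF : F ⊆ G.edgeSet) (hFk : F.ncard + 3 ≤ k) :
    SuperLambda (G.deleteEdges F) 1 := by
  have hδ := three_le_degN_deleteEdges hreg hFk
  obtain ⟨v⟩ := hs.1.nonempty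
  obtain ⟨w, hvw⟩ : ∃ w, (G.deleteEdges F).Adj v w :=
    exists_adj_of_degN_pos (by have := hδ v; omega)
  refine superLambda_of_minimum_cuts ?_ (Set.ncard_pair hvw.ne)
    (induce_pair_connected_of_adj hvw) hδ
    fun C hC hCmin ↦ exists_ncard_supp_eq_two_of_minimum_cut hreg hs hk hF hFk hC hCmin
  refine connected_deleteEdges (h := 2) hF (fun v ↦ (hδ v).trans' (by omega)) fun hcut ↦ ?_
  have := hs.mul_le_ncard_add (fun v ↦ (hreg v).ge) hcut
  omega

end Regular

lemma exists_triangle_of_egirth_eq_three (hg : G.egirth = 3) :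
    ∃ a b c, G.Adj a b ∧ G.Adj a c ∧ G.Adj b c := by
  have hcyc : ¬ G.IsAcyclic := by
    rw [← egirth_eq_top, hg]
    decide
  obtain ⟨a, w, -, hlen⟩ := exists_egirth_eq_length.mpr hcyc
  rw [hg] at hlen
  match w, (by exact_mod_cast hlen.symm : w.length = 3) with
  | .cons h₁ (.cons h₂ (.cons h₃ .nil)), _ => exact ⟨_, _, _, h₁, h₃.symm, h₂⟩

lemma exists_matching_subset_edgeBoundary [Finite V] {T : Set V} {a b c : V}
    (ha : a ∈ T) (hb : b ∈ T) (hc : c ∈ T) (hab : a ≠ b) (hac : a ≠ c) (hbc : b ≠ c)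
    (hout : ∀ x ∈ T, 3 ≤ (G.neighborSet x \ T).ncard) :
    ∃ F ⊆ edgeBoundary G T, F.ncard = 3 ∧ F.Pairwise fun e e' ↦ ∀ v ∈ e, v ∉ e' := by
  obtain ⟨za, hza⟩ := Set.nonempty_of_ncard_ne_zero (s := G.neighborSet a \ T)
    (by have := hout a ha; omega)
  obtain ⟨zb, hzb, hzba⟩ :=
    Set.exists_mem_notMem_of_ncard_lt_ncard (s := {za}) (t := G.neighborSet b \ T)
    (by have := hout b hb; simp; omega)
  obtain ⟨zc, hzc, hzcab⟩ :=
    Set.exists_mem_notMem_of_ncard_lt_ncard (s := {za, zb}) (t := G.neighborSet c \ T)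
    (by have := hout c hc; have := Set.ncard_insert_le za {zb}; simp at *; omega)
  simp only [Set.mem_sdiff, Set.mem_insert_iff, Set.mem_singleton_iff, mem_neighborSet,
    not_or] at hza hzb hzba hzc hzcab
  refine ⟨{s(a, za), s(b, zb), s(c, zc)}, ?_, ?_, ?_⟩
  · simp only [Set.insert_subset_iff, Set.singleton_subset_iff, mk_mem_edgeBoundary_iff]
    exact ⟨⟨hza.1, iff_of_true ha hza.2⟩, ⟨hzb.1, iff_of_true hb hzb.2⟩,
      ⟨hzc.1, iff_of_true hc hzc.2⟩⟩
  · exact Set.ncard_eq_three.mpr ⟨_, _, _, by grind, by grind, by grind, rfl⟩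
  · simp only [Set.pairwise_insert, Set.pairwise_singleton, Set.mem_insert_iff,
      Set.mem_singleton_iff, Sym2.mem_iff]
    grind

lemma exists_not_superLambda_one_deleteEdges [Finite V] {a b c : V}
    (hreg : ∀ v, degN G v = 5) (hab : G.Adj a b) (hac : G.Adj a c) (hbc : G.Adj b c) :
    ∃ F ⊆ G.edgeSet, F.ncard = 3 ∧ ¬ SuperLambda (G.deleteEdges F) 1 := by
  set T : Set V := {a, b, c} with hT
  have hT3 : T.ncard = 3 := Set.ncard_eq_three.mpr ⟨a, b, c, hab.ne, hac.ne, hbc.ne, rfl⟩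
  have hTcl : G.IsClique T := by simp [hT, isClique_insert, hab, hac, hbc]
  have hcut := isExtraEdgeCut_edgeBoundary hT3 (hTcl.induce_connected ⟨a, by simp [hT]⟩)
    (h := 2) fun v ↦ (hreg v).ge
  have hout : ∀ x ∈ T, 3 ≤ (G.neighborSet x \ T).ncard := fun x hx ↦ by
    have := ncard_neighborSet_inter_le (G := G) hx
    have := Set.ncard_inter_add_ncard_sdiff_eq_ncard (G.neighborSet x) T
    have := hreg x
    unfold degN at this
    omega
  obtain ⟨F, hFT, hF3, hmatch⟩ := exists_matching_subset_edgeBoundary (by simp [hT])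
    (by simp [hT]) (by simp [hT]) hab.ne hac.ne hbc.ne hout
  have hδ : ∀ v, 4 ≤ degN (G.deleteEdges F) v := fun v ↦ by
    have := degN_le_degN_deleteEdges_add_one (G := G) hmatch v
    have := hreg v
    omega
  have habF : (G.deleteEdges F).Adj a b :=
    hTcl.deleteEdges_of_subset_edgeBoundary hFT (by simp [hT]) (by simp [hT]) hab.ne
  refine ⟨F, hFT.trans edgeBoundary_subset_edgeSet, hF3,
    not_superLambda_of_isExtraEdgeCut_succ (Set.ncard_pair hab.ne)
      (induce_pair_connected_of_adj habF) hδ (hcut.deleteEdges_sdiff hFT) ?_⟩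
  have := dOut_triangle_add_six hab hac hbc
  rw [Set.ncard_sdiff hFT, hF3, ← dOut_eq_ncard_edgeBoundary]
  simp only [hreg, ← hT] at this
  omega

section Persistence

variable {h m : ℕ} {F₀ : Set (Sym2 V)}

lemma lt_ncard_of_forall_superLambda_deleteEdges (hF₀ : F₀ ⊆ G.edgeSet)
    (hbad : ¬ SuperLambda (G.deleteEdges F₀) h)
    (hm : ∀ F ⊆ G.edgeSet, F.ncard ≤ m → SuperLambda (G.deleteEdges F) h) :
    m < F₀.ncard :=
  lt_of_not_ge fun hle ↦ hbad (hm F₀ hF₀ hle)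

lemma le_rhoH (hF₀ : F₀ ⊆ G.edgeSet) (hbad : ¬ SuperLambda (G.deleteEdges F₀) h)
    (hm : ∀ F ⊆ G.edgeSet, F.ncard ≤ m → SuperLambda (G.deleteEdges F) h) :
    m ≤ rhoH G h :=
  le_csSup ⟨F₀.ncard, fun _ hm' ↦
    (lt_ncard_of_forall_superLambda_deleteEdges hF₀ hbad hm').le⟩ hm

lemma rhoH_le_ncard_sub_one (hF₀ : F₀ ⊆ G.edgeSet)
    (hbad : ¬ SuperLambda (G.deleteEdges F₀) h) :
    rhoH G h ≤ F₀.ncard - 1 :=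
  csSup_le' fun _ hm ↦
    Nat.le_sub_one_of_lt (lt_ncard_of_forall_superLambda_deleteEdges hF₀ hbad hm)

lemma not_superLambda_deleteEdges_edgeSet (hxy : G.Adj x y) :
    ¬ SuperLambda (G.deleteEdges G.edgeSet) h := fun hs ↦ by
  rw [deleteEdges_edgeSet, sdiff_self] at hs
  exact hxy.ne ((connected_bot_iff.mp hs.1).1.elim x y)

end Persistence

end SimpleGraph

/-- For a `k`-regular super-`λ''` graph with girth `3`: if `k ≥ 6` then it is super-`λ'`
with `ρ'(G) ≥ k - 3`; if `k = 5` then it is super-`λ'` with `ρ'(G) = 2`. -/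
theorem stmt15 {V : Type*} [Fintype V] (G : SimpleGraph V) (k : ℕ)
    (hreg : ∀ v, degN G v = k) (hs : SuperLambda G 2) (hg : G.egirth = 3) :
    (6 ≤ k → SuperLambda G 1 ∧ k - 3 ≤ rhoH G 1) ∧
    (k = 5 → SuperLambda G 1 ∧ rhoH G 1 = 2) := by
  have hpersist :
      5 ≤ k → ∀ F ⊆ G.edgeSet, F.ncard ≤ k - 3 → SuperLambda (G.deleteEdges F) 1 :=
    fun hk _ hF hFk ↦ superLambda_one_deleteEdges hreg hs hk hF (by omega)
  have hsuper : 5 ≤ k → SuperLambda G 1 := fun hk ↦ by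
    simpa using hpersist hk ∅ (Set.empty_subset _) (by simp)
  refine ⟨fun hk ↦ ⟨hsuper (by omega), ?_⟩, fun hk ↦ ?_⟩
  · obtain ⟨v⟩ := hs.1.nonempty
    obtain ⟨w, hvw⟩ := exists_adj_of_degN_pos (by rw [hreg]; omega : 0 < degN G v)
    exact le_rhoH subset_rfl (not_superLambda_deleteEdges_edgeSet hvw) (hpersist (by omega))
  · subst hk
    obtain ⟨a, b, c, hab, hac, hbc⟩ := exists_triangle_of_egirth_eq_three hg
    obtain ⟨F, hF, hF3, hbad⟩ := exists_not_superLambda_one_deleteEdges hreg hab hac hbc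
    refine ⟨hsuper le_rfl, (rhoH_le_ncard_sub_one hF hbad).trans (by omega) |>.antisymm ?_⟩
    exact le_rhoH hF hbad (hpersist le_rfl)
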